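/- arXiv:1101.3699 — 12 statements merged into one kernel-verified Lean document; each statement's English description precedes it below -/
import Mathlib

section
/- Let S be a semigroup, let A = (μ_A, ν_A) be an intuitionistic fuzzy subset of S, let β ∈ (0,1] and let α be a real number with 0 ≤ α and α ≤ β·ν_A(x) for every x ∈ S with ν_A(x) > 0. Then the intuitionistic fuzzy magnified translation A^C_{βα} = ((μ_A)^C_{βα}, (ν_A)^C_{βα}) of A is an intuitionistic fuzzy subsemigroup of S if and only if A is an intuitionistic fuzzy subsemigroup of S. -/
/-- An intuitionistic fuzzy subset of `S`: a pair of functions `μ ν : S → ℝ`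
taking values in `[0,1]` with `μ x + ν x ≤ 1` for all `x`. -/
def IsIFSubset {S : Type*} (μ ν : S → ℝ) : Prop :=
  ∀ x, 0 ≤ μ x ∧ μ x ≤ 1 ∧ 0 ≤ ν x ∧ ν x ≤ 1 ∧ μ x + ν x ≤ 1

/-- Intuitionistic fuzzy subsemigroup conditions. -/
def IsIFSubsemigroup {S : Type*} [Semigroup S] (μ ν : S → ℝ) : Prop :=
  ∀ x y, min (μ x) (μ y) ≤ μ (x * y) ∧ ν (x * y) ≤ max (ν x) (ν y)

/-- Intuitionistic fuzzy bi-ideal conditions. -/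
def IsIFBiIdeal {S : Type*} [Semigroup S] (μ ν : S → ℝ) : Prop :=
  IsIFSubsemigroup μ ν ∧
    ∀ x y z, min (μ x) (μ z) ≤ μ (x * y * z) ∧ ν (x * y * z) ≤ max (ν x) (ν z)

/-- Intuitionistic fuzzy (1,2)-ideal conditions. -/
def IsIFOneTwoIdeal {S : Type*} [Semigroup S] (μ ν : S → ℝ) : Prop :=
  IsIFSubsemigroup μ ν ∧
    ∀ x w y z, min (μ x) (min (μ y) (μ z)) ≤ μ (x * w * (y * z)) ∧
      ν (x * w * (y * z)) ≤ max (ν x) (max (ν y) (ν z))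

/-- Intuitionistic fuzzy left ideal conditions. -/
def IsIFLeftIdeal {S : Type*} [Semigroup S] (μ ν : S → ℝ) : Prop :=
  ∀ x y, μ y ≤ μ (x * y) ∧ ν (x * y) ≤ ν y

/-- Intuitionistic fuzzy right ideal conditions. -/
def IsIFRightIdeal {S : Type*} [Semigroup S] (μ ν : S → ℝ) : Prop :=
  ∀ x y, μ x ≤ μ (x * y) ∧ ν (x * y) ≤ ν x

/-- Intuitionistic fuzzy (two-sided) ideal conditions. -/
def IsIFIdeal {S : Type*} [Semigroup S] (μ ν : S → ℝ) : Prop :=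
  IsIFLeftIdeal μ ν ∧ IsIFRightIdeal μ ν

/-- Intuitionistic fuzzy semiprime ideal conditions. -/
def IsIFSemiprimeIdeal {S : Type*} [Semigroup S] (μ ν : S → ℝ) : Prop :=
  IsIFIdeal μ ν ∧ ∀ x, μ (x * x) ≤ μ x ∧ ν x ≤ ν (x * x)

-- Membership function of the product `A ∘ B` of intuitionistic fuzzy subsets.
open Classical in
noncomputable def ifMuProd {S : Type*} [Semigroup S] (f g : S → ℝ) (x : S) : ℝ :=
  if ∃ u v : S, x = u * v then
    sSup {r : ℝ | ∃ u v : S, x = u * v ∧ r = min (f u) (g v)}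
  else 0

-- Non-membership function of the product `A ∘ B` of intuitionistic fuzzy subsets.
open Classical in
noncomputable def ifNuProd {S : Type*} [Semigroup S] (f g : S → ℝ) (x : S) : ℝ :=
  if ∃ u v : S, x = u * v then
    sInf {r : ℝ | ∃ u v : S, x = u * v ∧ r = max (f u) (g v)}
  else 1

theorem stmt0 {S : Type*} [Semigroup S] (μ ν : S → ℝ) (hA : IsIFSubset μ ν)
    (β α : ℝ) (hβ0 : 0 < β) (hβ1 : β ≤ 1) (hα0 : 0 ≤ α)
    (hα : ∀ x : S, 0 < ν x → α ≤ β * ν x) :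
    IsIFSubsemigroup (fun x => β * μ x + α) (fun x => β * ν x - α) ↔
      IsIFSubsemigroup μ ν := by
  constructor
  · intro h x y
    obtain ⟨h1, h2⟩ := h x y
    simp only at h1 h2
    constructor
    · rcases le_total (μ x) (μ y) with hxy | hxy
      · rw [min_eq_left hxy]
        have : min (β * μ x + α) (β * μ y + α) = β * μ x + α :=
          min_eq_left (by nlinarith)
        rw [this] at h1; nlinarith
      · rw [min_eq_right hxy]
        have : min (β * μ x + α) (β * μ y + α) = β * μ y + α :=
          min_eq_right (by nlinarith)
        rw [this] at h1; nlinarith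
    · rcases le_total (ν x) (ν y) with hxy | hxy
      · rw [max_eq_right hxy]
        have : max (β * ν x - α) (β * ν y - α) = β * ν y - α :=
          max_eq_right (by nlinarith)
        rw [this] at h2; nlinarith
      · rw [max_eq_left hxy]
        have : max (β * ν x - α) (β * ν y - α) = β * ν x - α :=
          max_eq_left (by nlinarith)
        rw [this] at h2; nlinarith
  · intro h x y
    obtain ⟨h1, h2⟩ := h x y
    simp only
    constructor
    · rcases le_total (μ x) (μ y) with hxy | hxy
      · have : min (β * μ x + α) (β * μ y + α) = β * μ x + α :=
          min_eq_left (by nlinarith)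
        rw [min_eq_left hxy] at h1; rw [this]; nlinarith
      · have : min (β * μ x + α) (β * μ y + α) = β * μ y + α :=
          min_eq_right (by nlinarith)
        rw [min_eq_right hxy] at h1; rw [this]; nlinarith
    · rcases le_total (ν x) (ν y) with hxy | hxy
      · have : max (β * ν x - α) (β * ν y - α) = β * ν y - α :=
          max_eq_right (by nlinarith)
        rw [max_eq_right hxy] at h2; rw [this]; nlinarith
      · have : max (β * ν x - α) (β * ν y - α) = β * ν x - α :=
          max_eq_left (by nlinarith)
        rw [max_eq_left hxy] at h2; rw [this]; nlinarith
end

section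
/- Let S be a semigroup, let A = (μ_A, ν_A) be an intuitionistic fuzzy subset of S, let β ∈ (0,1] and let α be a real number with 0 ≤ α and α ≤ β·ν_A(x) for every x ∈ S with ν_A(x) > 0. Then the intuitionistic fuzzy magnified translation A^C_{βα} of A is an intuitionistic fuzzy bi-ideal of S if and only if A is an intuitionistic fuzzy bi-ideal of S. -/
theorem stmt1 {S : Type*} [Semigroup S] (μ ν : S → ℝ) (hA : IsIFSubset μ ν)
    (β α : ℝ) (hβ0 : 0 < β) (hβ1 : β ≤ 1) (hα0 : 0 ≤ α)
    (hα : ∀ x : S, 0 < ν x → α ≤ β * ν x) :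
    IsIFBiIdeal (fun x => β * μ x + α) (fun x => β * ν x - α) ↔
      IsIFBiIdeal μ ν := by
  have hmin : ∀ a b : ℝ, min (β * a + α) (β * b + α) = β * min a b + α := by
    intro a b
    rcases le_total a b with h | h
    · rw [min_eq_left h, min_eq_left (by nlinarith)]
    · rw [min_eq_right h, min_eq_right (by nlinarith)]
  have hmax : ∀ a b : ℝ, max (β * a - α) (β * b - α) = β * max a b - α := by
    intro a b
    rcases le_total a b with h | h
    · rw [max_eq_right h, max_eq_right (by nlinarith)]
    · rw [max_eq_left h, max_eq_left (by nlinarith)]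
  constructor
  · rintro ⟨h1, h2⟩
    refine ⟨fun x y => ?_, fun x y z => ?_⟩
    · obtain ⟨ha, hb⟩ := h1 x y
      simp only [hmin, hmax] at ha hb
      exact ⟨by nlinarith, by nlinarith⟩
    · obtain ⟨ha, hb⟩ := h2 x y z
      simp only [hmin, hmax] at ha hb
      exact ⟨by nlinarith, by nlinarith⟩
  · rintro ⟨h1, h2⟩
    refine ⟨fun x y => ?_, fun x y z => ?_⟩
    · obtain ⟨ha, hb⟩ := h1 x y
      simp only [hmin, hmax]
      exact ⟨by nlinarith, by nlinarith⟩
    · obtain ⟨ha, hb⟩ := h2 x y z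
      simp only [hmin, hmax]
      exact ⟨by nlinarith, by nlinarith⟩
end

section
/- Let S be a group, let A = (μ_A, ν_A) be an intuitionistic fuzzy subset of S, let β ∈ (0,1] and let α be a real number with 0 ≤ α and α ≤ β·ν_A(x) for every x ∈ S with ν_A(x) > 0. Then A is an intuitionistic fuzzy bi-ideal of S if and only if the intuitionistic fuzzy magnified translation A^C_{βα} of A is a constant function, i.e. there exist constants c, d such that (μ_A)^C_{βα}(x) = c and (ν_A)^C_{βα}(x) = d for all x ∈ S. -/
theorem stmt2 {S : Type*} [Group S] (μ ν : S → ℝ) (hA : IsIFSubset μ ν)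
    (β α : ℝ) (hβ0 : 0 < β) (hβ1 : β ≤ 1) (hα0 : 0 ≤ α)
    (hα : ∀ x : S, 0 < ν x → α ≤ β * ν x) :
    IsIFBiIdeal μ ν ↔
      ∃ c d : ℝ, ∀ x : S, β * μ x + α = c ∧ β * ν x - α = d := by
  constructor
  · rintro ⟨-, h2⟩
    have key : ∀ a b : S, μ b ≤ μ a ∧ ν a ≤ ν b := by
      intro a b
      have := h2 b (b⁻¹ * a * b⁻¹) b
      have hab : b * (b⁻¹ * a * b⁻¹) * b = a := by group
      rw [hab, min_self, max_self] at this
      exact this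
    refine ⟨β * μ 1 + α, β * ν 1 - α, fun x => ?_⟩
    have h1 := key x 1
    have h2' := key 1 x
    have hμ : μ x = μ 1 := le_antisymm h2'.1 h1.1
    have hν : ν x = ν 1 := le_antisymm h1.2 h2'.2
    rw [hμ, hν]; exact ⟨rfl, rfl⟩
  · rintro ⟨c, d, h⟩
    have hμ : ∀ x y : S, μ x = μ y := by
      intro x y
      have hx := (h x).1; have hy := (h y).1
      nlinarith
    have hν : ∀ x y : S, ν x = ν y := by
      intro x y
      have hx := (h x).2; have hy := (h y).2
      nlinarith
    constructor
    · intro x y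
      exact ⟨min_le_of_left_le (hμ x (x*y)).le, (hν (x*y) y).le.trans (le_max_right _ _)⟩
    · intro x y z
      exact ⟨min_le_of_left_le (hμ x (x*y*z)).le, (hν (x*y*z) z).le.trans (le_max_right _ _)⟩
end

section
/- Let S be a semigroup, let A = (μ_A, ν_A) be an intuitionistic fuzzy subset of S, let β ∈ (0,1] and let α be a real number with 0 ≤ α and α ≤ β·ν_A(x) for every x ∈ S with ν_A(x) > 0. Then the intuitionistic fuzzy magnified translation A^C_{βα} of A is an intuitionistic fuzzy (1,2)-ideal of S if and only if A is an intuitionistic fuzzy (1,2)-ideal of S. -/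
theorem stmt3 {S : Type*} [Semigroup S] (μ ν : S → ℝ) (hA : IsIFSubset μ ν)
    (β α : ℝ) (hβ0 : 0 < β) (hβ1 : β ≤ 1) (hα0 : 0 ≤ α)
    (hα : ∀ x : S, 0 < ν x → α ≤ β * ν x) :
    IsIFOneTwoIdeal (fun x => β * μ x + α) (fun x => β * ν x - α) ↔
      IsIFOneTwoIdeal μ ν := by
  have hmin : ∀ a b : ℝ, min (β * a + α) (β * b + α) = β * min a b + α := by
    intro a b
    rcases le_total a b with h | h
    · rw [min_eq_left h, min_eq_left (by nlinarith)]
    · rw [min_eq_right h, min_eq_right (by nlinarith)]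
  have hmax : ∀ a b : ℝ, max (β * a - α) (β * b - α) = β * max a b - α := by
    intro a b
    rcases le_total a b with h | h
    · rw [max_eq_right h, max_eq_right (by nlinarith)]
    · rw [max_eq_left h, max_eq_left (by nlinarith)]
  have hle : ∀ a b : ℝ, β * a ≤ β * b ↔ a ≤ b := fun a b =>
    mul_le_mul_iff_right₀ hβ0
  constructor
  · rintro ⟨h1, h2⟩
    refine ⟨fun x y => ?_, fun x w y z => ?_⟩
    · obtain ⟨h1a, h1b⟩ := h1 x y
      simp only [hmin, hmax] at h1a h1b
      constructor
      · rw [← hle] ; linarith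
      · rw [← hle] ; linarith
    · obtain ⟨h2a, h2b⟩ := h2 x w y z
      simp only [hmin, hmax] at h2a h2b
      constructor
      · rw [← hle] ; linarith
      · rw [← hle] ; linarith
  · rintro ⟨h1, h2⟩
    refine ⟨fun x y => ?_, fun x w y z => ?_⟩
    · obtain ⟨h1a, h1b⟩ := h1 x y
      simp only [hmin, hmax]
      constructor
      · have := (hle _ _).2 h1a ; linarith
      · have := (hle _ _).2 h1b ; linarith
    · obtain ⟨h2a, h2b⟩ := h2 x w y z
      simp only [hmin, hmax]
      constructor
      · have := (hle _ _).2 h2a ; linarith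
      · have := (hle _ _).2 h2b ; linarith
end

section
/- Let S be a semigroup, let A = (μ_A, ν_A) be an intuitionistic fuzzy subset of S, let β ∈ (0,1] and let α be a real number with 0 ≤ α and α ≤ β·ν_A(x) for every x ∈ S with ν_A(x) > 0. Then the intuitionistic fuzzy magnified translation A^C_{βα} of A is an intuitionistic fuzzy semiprime ideal of S if and only if A is an intuitionistic fuzzy semiprime ideal of S. -/
theorem stmt6 {S : Type*} [Semigroup S] (μ ν : S → ℝ) (hA : IsIFSubset μ ν)
    (β α : ℝ) (hβ0 : 0 < β) (hβ1 : β ≤ 1) (hα0 : 0 ≤ α)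
    (hα : ∀ x : S, 0 < ν x → α ≤ β * ν x) :
    IsIFSemiprimeIdeal (fun x => β * μ x + α) (fun x => β * ν x - α) ↔
      IsIFSemiprimeIdeal μ ν := by
  have key : ∀ a b : ℝ, (β * a + α ≤ β * b + α ↔ a ≤ b) := fun a b => by
    constructor <;> intro h <;> nlinarith
  have key2 : ∀ a b : ℝ, (β * a - α ≤ β * b - α ↔ a ≤ b) := fun a b => by
    constructor <;> intro h <;> nlinarith
  simp only [IsIFSemiprimeIdeal, IsIFIdeal, IsIFLeftIdeal, IsIFRightIdeal, key, key2]
end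

section
/- Let S be a semigroup. Then S is intra-regular (for each a ∈ S there exist x, y ∈ S with a = x·a²·y) if and only if for every intuitionistic fuzzy ideal A = (μ_A, ν_A) of S, every β ∈ (0,1] and every real α with 0 ≤ α and α ≤ β·ν_A(x) for every x ∈ S with ν_A(x) > 0, the intuitionistic fuzzy magnified translation A^C_{βα} of A is an intuitionistic fuzzy semiprime ideal of S. -/
theorem stmt10 {S : Type*} [Semigroup S] :
    (∀ a : S, ∃ x y : S, a = x * (a * a) * y) ↔
      ∀ μ ν : S → ℝ, IsIFSubset μ ν → IsIFIdeal μ ν →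
        ∀ β α : ℝ, 0 < β → β ≤ 1 → 0 ≤ α → (∀ x : S, 0 < ν x → α ≤ β * ν x) →
          IsIFSemiprimeIdeal (fun x => β * μ x + α) (fun x => β * ν x - α) := by
  constructor
  · intro h μ ν hsub hid β α hβ hβ1 hα hαν
    refine ⟨⟨?_, ?_⟩, ?_⟩
    · intro x y
      have h1 := (hid.1 x y).1
      have h2 := (hid.1 x y).2
      refine ⟨by dsimp only; nlinarith, by dsimp only; nlinarith⟩
    · intro x y
      have h1 := (hid.2 x y).1
      have h2 := (hid.2 x y).2
      refine ⟨by dsimp only; nlinarith, by dsimp only; nlinarith⟩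
    · intro x
      obtain ⟨u, v, hx⟩ := h x
      have h1 : μ (x * x) ≤ μ x := by
        conv_rhs => rw [hx]
        exact le_trans (hid.1 u (x*x)).1 (hid.2 (u * (x*x)) v).1
      have h2 : ν x ≤ ν (x * x) := by
        conv_lhs => rw [hx]
        exact le_trans (hid.2 (u * (x*x)) v).2 (hid.1 u (x*x)).2
      refine ⟨by dsimp only; nlinarith, by dsimp only; nlinarith⟩
  · intro H a
    classical
    set P : S → Prop := fun b => b = a * a ∨ (∃ s, b = a * a * s) ∨
      (∃ s, b = s * (a * a)) ∨ (∃ s t, b = s * (a * a) * t) with hP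
    set μ : S → ℝ := fun b => if P b then 1 else 0 with hμ
    set ν : S → ℝ := fun b => if P b then 0 else 1 with hν
    have hsub : IsIFSubset μ ν := by
      intro x
      simp only [hμ, hν]
      by_cases hx : P x <;> simp [hx]
    have hPmul : ∀ x y : S, P y → P (x * y) := by
      intro x y hy
      rcases hy with h | ⟨s, h⟩ | ⟨s, h⟩ | ⟨s, t, h⟩
      · exact Or.inr (Or.inr (Or.inl ⟨x, by rw [h]⟩))
      · exact Or.inr (Or.inr (Or.inr ⟨x, s, by rw [h]; simp [mul_assoc]⟩))
      · exact Or.inr (Or.inr (Or.inl ⟨x * s, by rw [h]; simp [mul_assoc]⟩))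
      · exact Or.inr (Or.inr (Or.inr ⟨x * s, t, by rw [h]; simp [mul_assoc]⟩))
    have hPmulr : ∀ x y : S, P x → P (x * y) := by
      intro x y hx
      rcases hx with h | ⟨s, h⟩ | ⟨s, h⟩ | ⟨s, t, h⟩
      · exact Or.inr (Or.inl ⟨y, by rw [h]⟩)
      · exact Or.inr (Or.inl ⟨s * y, by rw [h]; simp [mul_assoc]⟩)
      · exact Or.inr (Or.inr (Or.inr ⟨s, y, by rw [h]⟩))
      · exact Or.inr (Or.inr (Or.inr ⟨s, t * y, by rw [h]; simp [mul_assoc]⟩))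
    have hid : IsIFIdeal μ ν := by
      constructor
      · intro x y
        simp only [hμ, hν]
        by_cases hy : P y
        · simp [hy, hPmul x y hy]
        · by_cases hxy : P (x * y) <;> simp [hy, hxy]
      · intro x y
        simp only [hμ, hν]
        by_cases hx : P x
        · simp [hx, hPmulr x y hx]
        · by_cases hxy : P (x * y) <;> simp [hx, hxy]
    have hsp := (H μ ν hsub hid 1 0 one_pos le_rfl le_rfl
      (fun x hx => by positivity)).2 a
    have h1 : μ (a * a) ≤ μ a := by
      have := hsp.1; simpa using this
    have hμaa : μ (a * a) = 1 := by simp [hμ, hP]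
    have ha : P a := by
      by_contra hc
      have h0 : μ a = 0 := by simp [hμ, hc]
      rw [h0, hμaa] at h1
      linarith
    rcases ha with h | ⟨s, h⟩ | ⟨s, h⟩ | ⟨s, t, h⟩
    · exact ⟨a, a, (by rw [← h, ← h, ← h] : a * (a * a) * a = a).symm⟩
    · exact ⟨a, s * s, (by
        rw [mul_assoc a (a*a), ← mul_assoc (a*a) s s, ← h, ← mul_assoc, ← h] :
        a * (a * a) * (s * s) = a).symm⟩
    · exact ⟨s * s, a, (by
        rw [mul_assoc s s, ← h, mul_assoc, ← h] :
        s * s * (a * a) * a = a).symm⟩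
    · exact ⟨s, t, h⟩
end

section
/- Let S be an archimedean semigroup (for all a, b ∈ S there exist a positive integer n and elements x, y ∈ S such that aⁿ = x·b·y), let A = (μ_A, ν_A) be an intuitionistic fuzzy semiprime ideal of S, let β ∈ (0,1] and let α be a real number with 0 ≤ α and α ≤ β·ν_A(x) for every x ∈ S with ν_A(x) > 0. Then the intuitionistic fuzzy magnified translation A^C_{βα} of A is a constant function, i.e. (μ_A)^C_{βα}(m) = (μ_A)^C_{βα}(n) and (ν_A)^C_{βα}(m) = (ν_A)^C_{βα}(n) for all m, n ∈ S. -/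
/-- `ifPow a n` is the (n+1)-st power of `a` in a semigroup: `ifPow a 0 = a`,
`ifPow a (n+1) = ifPow a n * a`; so every positive power of `a` is of this form. -/
def ifPow {S : Type*} [Semigroup S] (a : S) : ℕ → S
  | 0 => a
  | n + 1 => ifPow a n * a


lemma ifPow_add {S : Type*} [Semigroup S] (a : S) (m n : ℕ) :
    ifPow a (m + n + 1) = ifPow a m * ifPow a n := by
  induction n with
  | zero => rfl
  | succ n ih =>
    show ifPow a (m + n + 1) * a = ifPow a m * (ifPow a n * a)
    rw [ih, mul_assoc]

lemma mu_mono {S : Type*} [Semigroup S] {μ ν : S → ℝ} (hI : IsIFIdeal μ ν)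
    (a : S) {m n : ℕ} (h : m ≤ n) : μ (ifPow a m) ≤ μ (ifPow a n) := by
  induction n with
  | zero => simpa [Nat.le_zero.mp h]
  | succ n ih =>
    rcases Nat.le_succ_iff.mp h with h' | h'
    · exact le_trans (ih h') (hI.2 (ifPow a n) a).1
    · simp [h']

lemma nu_mono {S : Type*} [Semigroup S] {μ ν : S → ℝ} (hI : IsIFIdeal μ ν)
    (a : S) {m n : ℕ} (h : m ≤ n) : ν (ifPow a n) ≤ ν (ifPow a m) := by
  induction n with
  | zero => simpa [Nat.le_zero.mp h]
  | succ n ih =>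
    rcases Nat.le_succ_iff.mp h with h' | h'
    · exact le_trans (hI.2 (ifPow a n) a).2 (ih h')
    · simp [h']

lemma mu_pow_le {S : Type*} [Semigroup S] {μ ν : S → ℝ}
    (hsp : IsIFSemiprimeIdeal μ ν) (a : S) : ∀ n, μ (ifPow a n) ≤ μ a := by
  intro n
  induction n using Nat.strong_induction_on with
  | _ n ih =>
    match n with
    | 0 => exact le_refl _
    | n + 1 => exact
      have h1 : n + 1 ≤ n + n + 1 := by omega
      calc μ (ifPow a (n + 1)) ≤ μ (ifPow a (n + n + 1)) := mu_mono hsp.1 a h1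
        _ = μ (ifPow a n * ifPow a n) := by rw [ifPow_add]
        _ ≤ μ (ifPow a n) := (hsp.2 (ifPow a n)).1
        _ ≤ μ a := ih n (by omega)

lemma nu_pow_ge {S : Type*} [Semigroup S] {μ ν : S → ℝ}
    (hsp : IsIFSemiprimeIdeal μ ν) (a : S) : ∀ n, ν a ≤ ν (ifPow a n) := by
  intro n
  induction n using Nat.strong_induction_on with
  | _ n ih =>
    match n with
    | 0 => exact le_refl _
    | n + 1 => exact
      have h1 : n + 1 ≤ n + n + 1 := by omega
      calc ν a ≤ ν (ifPow a n) := ih n (by omega)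
        _ ≤ ν (ifPow a n * ifPow a n) := (hsp.2 (ifPow a n)).2
        _ = ν (ifPow a (n + n + 1)) := by rw [ifPow_add]
        _ ≤ ν (ifPow a (n + 1)) := nu_mono hsp.1 a h1

theorem stmt13 {S : Type*} [Semigroup S]
    (harch : ∀ a b : S, ∃ (n : ℕ) (x y : S), ifPow a n = x * b * y)
    (μ ν : S → ℝ) (hA : IsIFSubset μ ν) (hsp : IsIFSemiprimeIdeal μ ν)
    (β α : ℝ) (hβ0 : 0 < β) (hβ1 : β ≤ 1) (hα0 : 0 ≤ α)
    (hα : ∀ x : S, 0 < ν x → α ≤ β * ν x) :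
    ∀ m n : S, (β * μ m + α = β * μ n + α) ∧ (β * ν m - α = β * ν n - α) := by
  have hmu : ∀ a b : S, μ b ≤ μ a := by
    intro a b
    obtain ⟨n, x, y, h⟩ := harch a b
    calc μ b ≤ μ (x * b) := (hsp.1.1 x b).1
      _ ≤ μ (x * b * y) := (hsp.1.2 (x * b) y).1
      _ = μ (ifPow a n) := by rw [h]
      _ ≤ μ a := mu_pow_le hsp a n
  have hnu : ∀ a b : S, ν a ≤ ν b := by
    intro a b
    obtain ⟨n, x, y, h⟩ := harch a b
    calc ν a ≤ ν (ifPow a n) := nu_pow_ge hsp a n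
      _ = ν (x * b * y) := by rw [h]
      _ ≤ ν (x * b) := (hsp.1.2 (x * b) y).2
      _ ≤ ν b := (hsp.1.1 x b).2
  intro m n
  refine ⟨by rw [le_antisymm (hmu n m) (hmu m n)], by rw [le_antisymm (hnu m n) (hnu n m)]⟩
end

section
/- Let S be a semigroup that is both regular (for each a ∈ S there exists x ∈ S with a = a·x·a) and intra-regular (for each a ∈ S there exist x, y ∈ S with a = x·a²·y). Let A = (μ_A, ν_A) and B = (μ_B, ν_B) be intuitionistic fuzzy bi-ideals of S, let β ∈ (0,1] and let α be a real number with 0 ≤ α and α ≤ β·ν_A(x) for every x ∈ S with ν_A(x) > 0 and α ≤ β·ν_B(x) for every x ∈ S with ν_B(x) > 0. Then A^C_{βα} ∘ B^C_{βα} ⊇ A^C_{βα} ∩ B^C_{βα}, and consequently (A^C_{βα} ∘ B^C_{βα}) ∩ (B^C_{βα} ∘ A^C_{βα}) ⊇ A^C_{βα} ∩ B^C_{βα}, where A^C_{βα} and B^C_{βα} are the intuitionistic fuzzy magnified translations of A and B. -/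
lemma key14 {S : Type*} [Semigroup S]
    (hreg : ∀ a : S, ∃ x : S, a = a * x * a)
    (hintra : ∀ a : S, ∃ x y : S, a = x * (a * a) * y)
    (μA νA μB νB : S → ℝ) (hA : IsIFSubset μA νA) (hB : IsIFSubset μB νB)
    (hAbi : IsIFBiIdeal μA νA) (hBbi : IsIFBiIdeal μB νB)
    (β α : ℝ) (hβ0 : 0 < β) :
    ∀ x : S,
        min (β * μA x + α) (β * μB x + α) ≤
          ifMuProd (fun s => β * μA s + α) (fun s => β * μB s + α) x ∧
        ifNuProd (fun s => β * νA s - α) (fun s => β * νB s - α) x ≤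
          max (β * νA x - α) (β * νB x - α) := by
  intro x
  obtain ⟨t, ht⟩ := hreg x
  obtain ⟨u, v, huv⟩ := hintra x
  have hmid : x = x * t * (u * (x * x) * v) := by rw [← huv]; exact ht
  have h2 : x = x * t * (u * (x * x) * v) * t * x := by
    nth_rewrite 1 [ht]
    rw [← hmid]
  have hpq : x = (x * (t * u) * x) * (x * (v * t) * x) :=
    h2.trans (by simp only [mul_assoc])
  have hp : μA x ≤ μA (x * (t * u) * x) := by
    have := (hAbi.2 x (t * u) x).1; simpa using this
  have hq : μB x ≤ μB (x * (v * t) * x) := by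
    have := (hBbi.2 x (v * t) x).1; simpa using this
  have hnp : νA (x * (t * u) * x) ≤ νA x := by
    have := (hAbi.2 x (t * u) x).2; simpa using this
  have hnq : νB (x * (v * t) * x) ≤ νB x := by
    have := (hBbi.2 x (v * t) x).2; simpa using this
  have hex : ∃ p q : S, x = p * q := ⟨_, _, hpq⟩
  constructor
  · rw [ifMuProd, if_pos hex]
    have hbdd : BddAbove {r : ℝ | ∃ p q : S, x = p * q ∧
        r = min (β * μA p + α) (β * μB q + α)} := by
      refine ⟨β + α, ?_⟩
      rintro r ⟨p, q, -, rfl⟩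
      calc min (β * μA p + α) (β * μB q + α) ≤ β * μA p + α := min_le_left _ _
        _ ≤ β * 1 + α := by nlinarith [(hA p).2.1]
        _ = β + α := by ring
    have hmem : min (β * μA (x * (t * u) * x) + α) (β * μB (x * (v * t) * x) + α) ∈
        {r : ℝ | ∃ p q : S, x = p * q ∧ r = min (β * μA p + α) (β * μB q + α)} :=
      ⟨_, _, hpq, rfl⟩
    refine le_trans (le_min ?_ ?_) (le_csSup hbdd hmem)
    · exact le_trans (min_le_left _ _) (by nlinarith)
    · exact le_trans (min_le_right _ _) (by nlinarith)
  · rw [ifNuProd, if_pos hex]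
    have hbdd : BddBelow {r : ℝ | ∃ p q : S, x = p * q ∧
        r = max (β * νA p - α) (β * νB q - α)} := by
      refine ⟨-α, ?_⟩
      rintro r ⟨p, q, -, rfl⟩
      have : -α ≤ β * νA p - α := by nlinarith [(hA p).2.2.1]
      exact le_trans this (le_max_left _ _)
    have hmem : max (β * νA (x * (t * u) * x) - α) (β * νB (x * (v * t) * x) - α) ∈
        {r : ℝ | ∃ p q : S, x = p * q ∧ r = max (β * νA p - α) (β * νB q - α)} :=
      ⟨_, _, hpq, rfl⟩
    refine le_trans (csInf_le hbdd hmem) (max_le_max ?_ ?_) <;> nlinarith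

theorem stmt14 {S : Type*} [Semigroup S]
    (hreg : ∀ a : S, ∃ x : S, a = a * x * a)
    (hintra : ∀ a : S, ∃ x y : S, a = x * (a * a) * y)
    (μA νA μB νB : S → ℝ) (hA : IsIFSubset μA νA) (hB : IsIFSubset μB νB)
    (hAbi : IsIFBiIdeal μA νA) (hBbi : IsIFBiIdeal μB νB)
    (β α : ℝ) (hβ0 : 0 < β) (hβ1 : β ≤ 1) (hα0 : 0 ≤ α)
    (hαA : ∀ x : S, 0 < νA x → α ≤ β * νA x)
    (hαB : ∀ x : S, 0 < νB x → α ≤ β * νB x) :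
    (∀ x : S,
        min (β * μA x + α) (β * μB x + α) ≤
          ifMuProd (fun s => β * μA s + α) (fun s => β * μB s + α) x ∧
        ifNuProd (fun s => β * νA s - α) (fun s => β * νB s - α) x ≤
          max (β * νA x - α) (β * νB x - α)) ∧
      ∀ x : S,
        min (β * μA x + α) (β * μB x + α) ≤
          min (ifMuProd (fun s => β * μA s + α) (fun s => β * μB s + α) x)
            (ifMuProd (fun s => β * μB s + α) (fun s => β * μA s + α) x) ∧
        max (ifNuProd (fun s => β * νA s - α) (fun s => β * νB s - α) x)
            (ifNuProd (fun s => β * νB s - α) (fun s => β * νA s - α) x) ≤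
          max (β * νA x - α) (β * νB x - α) := by
  have h1 := key14 hreg hintra μA νA μB νB hA hB hAbi hBbi β α hβ0
  have h2 := key14 hreg hintra μB νB μA νA hB hA hBbi hAbi β α hβ0
  refine ⟨h1, fun x => ⟨le_min (h1 x).1 ?_, max_le (h1 x).2 ?_⟩⟩
  · rw [min_comm]; exact (h2 x).1
  · rw [max_comm]; exact (h2 x).2
end

section
/- Let S be a semigroup that is regular (for each a ∈ S there exists x ∈ S with a = a·x·a), intra-regular (for each a ∈ S there exist x, y ∈ S with a = x·a²·y) and left regular (for each a ∈ S there exists x ∈ S with a = x·a²). Let A = (μ_A, ν_A) and B = (μ_B, ν_B) be intuitionistic fuzzy (1,2)-ideals of S, let β ∈ (0,1] and let α be a real number with 0 ≤ α and α ≤ β·ν_A(x) for every x ∈ S with ν_A(x) > 0 and α ≤ β·ν_B(x) for every x ∈ S with ν_B(x) > 0. Then A^C_{βα} ∘ B^C_{βα} ⊇ A^C_{βα} ∩ B^C_{βα}, and consequently (A^C_{βα} ∘ B^C_{βα}) ∩ (B^C_{βα} ∘ A^C_{βα}) ⊇ A^C_{βα} ∩ B^C_{βα}, where A^C_{βα}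 and B^C_{βα} are the intuitionistic fuzzy magnified translations of A and B. -/
theorem stmt15 {S : Type*} [Semigroup S]
    (hreg : ∀ a : S, ∃ x : S, a = a * x * a)
    (hintra : ∀ a : S, ∃ x y : S, a = x * (a * a) * y)
    (hleftreg : ∀ a : S, ∃ x : S, a = x * (a * a))
    (μA νA μB νB : S → ℝ) (hA : IsIFSubset μA νA) (hB : IsIFSubset μB νB)
    (hA12 : IsIFOneTwoIdeal μA νA) (hB12 : IsIFOneTwoIdeal μB νB)
    (β α : ℝ) (hβ0 : 0 < β) (hβ1 : β ≤ 1) (hα0 : 0 ≤ α)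
    (hαA : ∀ x : S, 0 < νA x → α ≤ β * νA x)
    (hαB : ∀ x : S, 0 < νB x → α ≤ β * νB x) :
    (∀ x : S,
        min (β * μA x + α) (β * μB x + α) ≤
          ifMuProd (fun s => β * μA s + α) (fun s => β * μB s + α) x ∧
        ifNuProd (fun s => β * νA s - α) (fun s => β * νB s - α) x ≤
          max (β * νA x - α) (β * νB x - α)) ∧
      ∀ x : S,
        min (β * μA x + α) (β * μB x + α) ≤
          min (ifMuProd (fun s => β * μA s + α) (fun s => β * μB s + α) x)
            (ifMuProd (fun s => β * μB s + α) (fun s => β * μA s + α) x) ∧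
        max (ifNuProd (fun s => β * νA s - α) (fun s => β * νB s - α) x)
            (ifNuProd (fun s => β * νB s - α) (fun s => β * νA s - α) x) ≤
          max (β * νA x - α) (β * νB x - α) := by
  -- Decomposition: every `a` can be written `a = u * a` with `u` of the form
  -- `a * w * (a * a)`, so both ideals take large μ / small ν values at `u`.
  have hdecomp : ∀ a : S, ∃ u : S, a = u * a ∧
      μA a ≤ μA u ∧ νA u ≤ νA a ∧ μB a ≤ μB u ∧ νB u ≤ νB a := by
    intro a
    obtain ⟨x, hx⟩ := hreg a
    obtain ⟨y, hy⟩ := hleftreg a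
    have h2 : a * (x * y) * a = a * (x * y * y) * (a * a) := by
      calc a * (x * y) * a = a * (x * y) * (y * (a * a)) := by rw [← hy]
        _ = a * (x * y * y) * (a * a) := by simp [mul_assoc]
    refine ⟨a * (x * y) * a, ?_, ?_, ?_, ?_, ?_⟩
    · calc a = a * x * a := hx
        _ = a * x * (y * (a * a)) := by rw [← hy]
        _ = a * (x * y) * a * a := by simp [mul_assoc]
    · rw [h2]; simpa using (hA12.2 a (x * y * y) a a).1
    · rw [h2]; simpa using (hA12.2 a (x * y * y) a a).2
    · rw [h2]; simpa using (hB12.2 a (x * y * y) a a).1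
    · rw [h2]; simpa using (hB12.2 a (x * y * y) a a).2
  -- Generic bound for `ifMuProd` from a single decomposition.
  have hsup : ∀ (f g : S → ℝ) (Cf : ℝ), (∀ s, f s ≤ Cf) → ∀ (a u v : S), a = u * v →
      min (f u) (g v) ≤ ifMuProd f g a := by
    intro f g Cf hCf a u v h
    rw [ifMuProd, if_pos ⟨u, v, h⟩]
    refine le_csSup ⟨Cf, ?_⟩ ⟨u, v, h, rfl⟩
    rintro r ⟨u', v', -, rfl⟩
    exact le_trans (min_le_left _ _) (hCf u')
  have hinf : ∀ (f g : S → ℝ) (Cf : ℝ), (∀ s, Cf ≤ f s) → ∀ (a u v : S), a = u * v →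
      ifNuProd f g a ≤ max (f u) (g v) := by
    intro f g Cf hCf a u v h
    rw [ifNuProd, if_pos ⟨u, v, h⟩]
    refine csInf_le ⟨Cf, ?_⟩ ⟨u, v, h, rfl⟩
    rintro r ⟨u', v', -, rfl⟩
    exact le_trans (hCf u') (le_max_left _ _)
  have bdA : ∀ s : S, (fun s => β * μA s + α) s ≤ β + α := by
    intro s; have := (hA s).2.1; simp only; nlinarith
  have bdB : ∀ s : S, (fun s => β * μB s + α) s ≤ β + α := by
    intro s; have := (hB s).2.1; simp only; nlinarith
  have bdA' : ∀ s : S, -α ≤ (fun s => β * νA s - α) s := by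
    intro s; have := (hA s).2.2.1; simp only; nlinarith
  have bdB' : ∀ s : S, -α ≤ (fun s => β * νB s - α) s := by
    intro s; have := (hB s).2.2.1; simp only; nlinarith
  have main : ∀ a : S,
      (min (β * μA a + α) (β * μB a + α) ≤
        ifMuProd (fun s => β * μA s + α) (fun s => β * μB s + α) a ∧
      ifNuProd (fun s => β * νA s - α) (fun s => β * νB s - α) a ≤
        max (β * νA a - α) (β * νB a - α)) ∧
      (min (β * μA a + α) (β * μB a + α) ≤
        ifMuProd (fun s => β * μB s + α) (fun s => β * μA s + α) a ∧
      ifNuProd (fun s => β * νB s - α) (fun s => β * νA s - α) a ≤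
        max (β * νA a - α) (β * νB a - α)) := by
    intro a
    obtain ⟨u, hu, hmuA, hnuA, hmuB, hnuB⟩ := hdecomp a
    refine ⟨⟨?_, ?_⟩, ?_, ?_⟩
    · refine le_trans ?_ (hsup _ _ (β + α) bdA a u a hu)
      exact min_le_min (by nlinarith) le_rfl
    · refine le_trans (hinf _ _ (-α) bdA' a u a hu) ?_
      exact max_le_max (by nlinarith) le_rfl
    · refine le_trans ?_ (hsup _ _ (β + α) bdB a u a hu)
      rw [min_comm]
      exact min_le_min (by nlinarith) le_rfl
    · refine le_trans (hinf _ _ (-α) bdB' a u a hu) ?_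
      rw [max_comm (β * νA a - α)]
      exact max_le_max (by nlinarith) le_rfl
  refine ⟨fun a => (main a).1, fun a => ?_⟩
  obtain ⟨⟨h1, h2⟩, h3, h4⟩ := main a
  exact ⟨le_min h1 h3, max_le h2 h4⟩
end

section
/- Let S be a regular semigroup (for each a ∈ S there exists x ∈ S with a = a·x·a), let A = (μ_A, ν_A) be an intuitionistic fuzzy right ideal of S and let B = (μ_B, ν_B) be an intuitionistic fuzzy left ideal of S. Then A ∘ B ⊇ A ∩ B, i.e. (μ_A ∘ μ_B)(x) ≥ min{μ_A(x), μ_B(x)} and (ν_A ∘ ν_B)(x) ≤ max{ν_A(x), ν_B(x)} for all x ∈ S. -/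
theorem stmt17 {S : Type*} [Semigroup S]
    (hreg : ∀ a : S, ∃ x : S, a = a * x * a)
    (μA νA μB νB : S → ℝ)
    (hA : IsIFSubset μA νA) (hB : IsIFSubset μB νB)
    (hAr : IsIFRightIdeal μA νA) (hBl : IsIFLeftIdeal μB νB) :
    ∀ x : S, min (μA x) (μB x) ≤ ifMuProd μA μB x ∧
      ifNuProd νA νB x ≤ max (νA x) (νB x) := by
  intro x
  obtain ⟨t, ht⟩ := hreg x
  have hex : ∃ u v : S, x = u * v := ⟨x * t, x, ht⟩
  constructor
  · rw [ifMuProd, if_pos hex]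
    have hmem : min (μA (x * t)) (μB x) ∈
        {r : ℝ | ∃ u v : S, x = u * v ∧ r = min (μA u) (μB v)} :=
      ⟨x * t, x, ht, rfl⟩
    have hbdd : BddAbove {r : ℝ | ∃ u v : S, x = u * v ∧ r = min (μA u) (μB v)} := by
      refine ⟨1, ?_⟩
      rintro r ⟨u, v, -, rfl⟩
      exact le_trans (min_le_left _ _) (hA u).2.1
    refine le_trans ?_ (le_csSup hbdd hmem)
    exact le_min (le_trans (min_le_left _ _) (hAr x t).1) (min_le_right _ _)
  · rw [ifNuProd, if_pos hex]
    have hmem : max (νA (x * t)) (νB x) ∈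
        {r : ℝ | ∃ u v : S, x = u * v ∧ r = max (νA u) (νB v)} :=
      ⟨x * t, x, ht, rfl⟩
    have hbdd : BddBelow {r : ℝ | ∃ u v : S, x = u * v ∧ r = max (νA u) (νB v)} := by
      refine ⟨0, ?_⟩
      rintro r ⟨u, v, -, rfl⟩
      exact le_trans (hA u).2.2.1 (le_max_left _ _)
    refine le_trans (csInf_le hbdd hmem) ?_
    exact max_le (le_trans (hAr x t).2 (le_max_left _ _)) (le_max_right _ _)
end

section
/- Let S be a semigroup. Then S is regular (for each a ∈ S there exists x ∈ S with a = a·x·a) if and only if A ∘ B = A ∩ B for every intuitionistic fuzzy right ideal A = (μ_A, ν_A) and every intuitionistic fuzzy left ideal B = (μ_B, ν_B) of S, i.e. (μ_A ∘ μ_B)(x) = min{μ_A(x), μ_B(x)} and (ν_A ∘ ν_B)(x) = max{ν_A(x), ν_B(x)} for all x ∈ S. -/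
theorem stmt18 {S : Type*} [Semigroup S] :
    (∀ a : S, ∃ x : S, a = a * x * a) ↔
      ∀ μA νA μB νB : S → ℝ, IsIFSubset μA νA → IsIFSubset μB νB →
        IsIFRightIdeal μA νA → IsIFLeftIdeal μB νB →
          ∀ x : S, ifMuProd μA μB x = min (μA x) (μB x) ∧
            ifNuProd νA νB x = max (νA x) (νB x) := by
  constructor
  · intro hreg μA νA μB νB hAs hBs hA hB x
    obtain ⟨t, hx⟩ := hreg x
    constructor
    · rw [ifMuProd, if_pos ⟨x * t, x, hx⟩]
      apply le_antisymm
      · apply Real.sSup_le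
        · rintro r ⟨u, v, huv, rfl⟩
          have h1 : μA u ≤ μA x := by rw [huv]; exact (hA u v).1
          have h2 : μB v ≤ μB x := by rw [huv]; exact (hB u v).1
          exact le_min (le_trans (min_le_left _ _) h1) (le_trans (min_le_right _ _) h2)
        · exact le_min (hAs x).1 (hBs x).1
      · have hmem : min (μA (x * t)) (μB x) ∈
            {r : ℝ | ∃ u v : S, x = u * v ∧ r = min (μA u) (μB v)} := ⟨x * t, x, hx, rfl⟩
        have hbdd : BddAbove {r : ℝ | ∃ u v : S, x = u * v ∧ r = min (μA u) (μB v)} := by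
          refine ⟨min (μA x) (μB x), ?_⟩
          rintro r ⟨u, v, huv, rfl⟩
          have h1 : μA u ≤ μA x := by rw [huv]; exact (hA u v).1
          have h2 : μB v ≤ μB x := by rw [huv]; exact (hB u v).1
          exact le_min (le_trans (min_le_left _ _) h1) (le_trans (min_le_right _ _) h2)
        have hle : min (μA x) (μB x) ≤ min (μA (x * t)) (μB x) :=
          min_le_min ((hA x t).1) (le_refl _)
        exact hle.trans (le_csSup hbdd hmem)
    · rw [ifNuProd, if_pos ⟨x * t, x, hx⟩]
      have hlow : ∀ r ∈ {r : ℝ | ∃ u v : S, x = u * v ∧ r = max (νA u) (νB v)},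
          max (νA x) (νB x) ≤ r := by
        rintro r ⟨u, v, huv, rfl⟩
        have h1 : νA x ≤ νA u := by rw [huv]; exact (hA u v).2
        have h2 : νB x ≤ νB v := by rw [huv]; exact (hB u v).2
        exact max_le_max h1 h2
      apply le_antisymm
      · have hmem : max (νA (x * t)) (νB x) ∈
            {r : ℝ | ∃ u v : S, x = u * v ∧ r = max (νA u) (νB v)} := ⟨x * t, x, hx, rfl⟩
        have hbdd : BddBelow {r : ℝ | ∃ u v : S, x = u * v ∧ r = max (νA u) (νB v)} :=
          ⟨max (νA x) (νB x), hlow⟩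
        have hle : max (νA (x * t)) (νB x) ≤ max (νA x) (νB x) :=
          max_le_max ((hA x t).2) (le_refl _)
        exact (csInf_le hbdd hmem).trans hle
      · exact le_csInf ⟨_, ⟨x * t, x, hx, rfl⟩⟩ hlow
  · intro h a
    classical
    set f : S → ℝ := fun z => if z = a ∨ ∃ s, z = a * s then 1 else 0 with hf
    set g : S → ℝ := fun z => if z = a ∨ ∃ s, z = s * a then 1 else 0 with hg
    have hf01 : ∀ z, f z = 0 ∨ f z = 1 := by
      intro z; simp only [hf]; split <;> simp
    have hg01 : ∀ z, g z = 0 ∨ g z = 1 := by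
      intro z; simp only [hg]; split <;> simp
    have hfsub : IsIFSubset f (fun z => 1 - f z) := by
      intro z; rcases hf01 z with h0 | h0 <;> norm_num [h0]
    have hgsub : IsIFSubset g (fun z => 1 - g z) := by
      intro z; rcases hg01 z with h0 | h0 <;> norm_num [h0]
    have hfmono : ∀ x y : S, f x ≤ f (x * y) := by
      intro x y
      rcases hf01 x with h0 | h1
      · rw [h0]; rcases hf01 (x * y) with h' | h' <;> rw [h'] <;> norm_num
      · have hx : x = a ∨ ∃ s, x = a * s := by
          by_contra hc
          have : f x = 0 := by simp only [hf]; rw [if_neg hc]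
          rw [h1] at this; norm_num at this
        have hxy : x * y = a ∨ ∃ s, x * y = a * s := by
          rcases hx with rfl | ⟨s, rfl⟩
          · exact Or.inr ⟨y, rfl⟩
          · exact Or.inr ⟨s * y, by rw [mul_assoc]⟩
        have : f (x * y) = 1 := by simp only [hf]; rw [if_pos hxy]
        rw [h1, this]
    have hgmono : ∀ x y : S, g y ≤ g (x * y) := by
      intro x y
      rcases hg01 y with h0 | h1
      · rw [h0]; rcases hg01 (x * y) with h' | h' <;> rw [h'] <;> norm_num
      · have hy : y = a ∨ ∃ s, y = s * a := by
          by_contra hc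
          have : g y = 0 := by simp only [hg]; rw [if_neg hc]
          rw [h1] at this; norm_num at this
        have hxy : x * y = a ∨ ∃ s, x * y = s * a := by
          rcases hy with rfl | ⟨s, rfl⟩
          · exact Or.inr ⟨x, rfl⟩
          · exact Or.inr ⟨x * s, by rw [mul_assoc]⟩
        have : g (x * y) = 1 := by simp only [hg]; rw [if_pos hxy]
        rw [h1, this]
    have hfR : IsIFRightIdeal f (fun z => 1 - f z) := by
      intro x y
      refine ⟨hfmono x y, ?_⟩
      show 1 - f (x * y) ≤ 1 - f x
      linarith [hfmono x y]
    have hgL : IsIFLeftIdeal g (fun z => 1 - g z) := by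
      intro x y
      refine ⟨hgmono x y, ?_⟩
      show 1 - g (x * y) ≤ 1 - g y
      linarith [hgmono x y]
    have hkey := (h f _ g _ hfsub hgsub hfR hgL a).1
    have hfa : f a = 1 := by simp [hf]
    have hga : g a = 1 := by simp [hg]
    rw [hfa, hga, min_self] at hkey
    rw [ifMuProd] at hkey
    by_cases hdec : ∃ u v : S, a = u * v
    · rw [if_pos hdec] at hkey
      have hex : ∃ u v : S, a = u * v ∧ (u = a ∨ ∃ s, u = a * s) ∧
          (v = a ∨ ∃ s, v = s * a) := by
        by_contra hc
        have hsup : sSup {r : ℝ | ∃ u v : S, a = u * v ∧ r = min (f u) (g v)} ≤ 0 := by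
          apply Real.sSup_le _ le_rfl
          rintro r ⟨u, v, huv, rfl⟩
          by_cases hu : u = a ∨ ∃ s, u = a * s
          · have hv : ¬(v = a ∨ ∃ s, v = s * a) := fun hv => hc ⟨u, v, huv, hu, hv⟩
            have : g v = 0 := by simp only [hg]; rw [if_neg hv]
            rw [this]
            exact min_le_right _ _
          · have : f u = 0 := by simp only [hf]; rw [if_neg hu]
            rw [this]
            exact min_le_left _ _
        rw [hkey] at hsup; norm_num at hsup
      obtain ⟨u, v, huv, hu, hv⟩ := hex
      rcases hu with hu | ⟨s, hu⟩ <;> rcases hv with hv | ⟨t, hv⟩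
      · rw [hu, hv] at huv
        exact ⟨a, by rw [← huv, ← huv]⟩
      · rw [hu, hv] at huv
        refine ⟨t, ?_⟩
        rw [← mul_assoc] at huv
        exact huv
      · rw [hu, hv] at huv
        exact ⟨s, huv⟩
      · rw [hu, hv] at huv
        refine ⟨s * t, ?_⟩
        simp only [mul_assoc] at huv ⊢
        exact huv
    · rw [if_neg hdec] at hkey; norm_num at hkey
end

section
/- Let S be a semigroup. Then S is regular (for each a ∈ S there exists x ∈ S with a = a·x·a) if and only if for every intuitionistic fuzzy right ideal A = (μ_A, ν_A) and every intuitionistic fuzzy left ideal B = (μ_B, ν_B) of S, every β ∈ (0,1] and every real α with 0 ≤ α, α ≤ β·ν_A(x) for every x ∈ S with ν_A(x) > 0 and α ≤ β·ν_B(x) for every x ∈ S with ν_B(x) > 0, the intuitionistic fuzzy magnified translations satisfy A^C_{βα} ∘ B^C_{βα} = A^C_{βα} ∩ B^C_{βα}, i.e. ((μ_A)^C_{βα} ∘ (μ_B)^C_{βα})(x) = min{(μ_A)^C_{βα}(x), (μ_B)^C_{βα}(x)} and ((ν_A)^C_{βα} ∘ (ν_B)^C_{βα})(x) = max{(ν_A)^C_{βα}(x),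 (ν_B)^C_{βα}(x)} for all x ∈ S. -/
theorem stmt19 {S : Type*} [Semigroup S] :
    (∀ a : S, ∃ x : S, a = a * x * a) ↔
      ∀ μA νA μB νB : S → ℝ, IsIFSubset μA νA → IsIFSubset μB νB →
        IsIFRightIdeal μA νA → IsIFLeftIdeal μB νB →
          ∀ β α : ℝ, 0 < β → β ≤ 1 → 0 ≤ α →
            (∀ x : S, 0 < νA x → α ≤ β * νA x) →
            (∀ x : S, 0 < νB x → α ≤ β * νB x) →
              ∀ x : S,
                ifMuProd (fun s => β * μA s + α) (fun s => β * μB s + α) x =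
                  min (β * μA x + α) (β * μB x + α) ∧
                ifNuProd (fun s => β * νA s - α) (fun s => β * νB s - α) x =
                  max (β * νA x - α) (β * νB x - α) := by
  constructor
  · intro hreg μA νA μB νB hA hB hRA hLB β α hβ hβ1 hα hνA hνB x
    obtain ⟨t, ht⟩ := hreg x
    have hx : ∃ u v : S, x = u * v := ⟨x * t, x, ht⟩
    constructor
    · rw [ifMuProd, if_pos hx]
      set f : S → ℝ := fun s => β * μA s + α with hf
      set g : S → ℝ := fun s => β * μB s + α with hg
      have hub : ∀ r ∈ {r : ℝ | ∃ u v : S, x = u * v ∧ r = min (f u) (g v)},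
          r ≤ min (f x) (g x) := by
        rintro r ⟨u, v, huv, rfl⟩
        have h1 : f u ≤ f x := by
          have := (hRA u v).1
          simp only [hf, huv]
          nlinarith
        have h2 : g v ≤ g x := by
          have := (hLB u v).1
          simp only [hg, huv]
          nlinarith
        exact min_le_min h1 h2
      have hmem : min (f (x * t)) (g x) ∈
          {r : ℝ | ∃ u v : S, x = u * v ∧ r = min (f u) (g v)} := ⟨x * t, x, ht, rfl⟩
      have hge : min (f x) (g x) ≤ min (f (x * t)) (g x) := by
        refine min_le_min ?_ le_rfl
        have := (hRA x t).1
        simp only [hf]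
        nlinarith
      exact le_antisymm (csSup_le ⟨_, hmem⟩ hub)
        (hge.trans (le_csSup ⟨_, hub⟩ hmem))
    · rw [ifNuProd, if_pos hx]
      set f : S → ℝ := fun s => β * νA s - α with hf
      set g : S → ℝ := fun s => β * νB s - α with hg
      have hlb : ∀ r ∈ {r : ℝ | ∃ u v : S, x = u * v ∧ r = max (f u) (g v)},
          max (f x) (g x) ≤ r := by
        rintro r ⟨u, v, huv, rfl⟩
        have h1 : f x ≤ f u := by
          have := (hRA u v).2
          simp only [hf, huv]
          nlinarith
        have h2 : g x ≤ g v := by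
          have := (hLB u v).2
          simp only [hg, huv]
          nlinarith
        exact max_le_max h1 h2
      have hmem : max (f (x * t)) (g x) ∈
          {r : ℝ | ∃ u v : S, x = u * v ∧ r = max (f u) (g v)} := ⟨x * t, x, ht, rfl⟩
      have hge : max (f (x * t)) (g x) ≤ max (f x) (g x) := by
        refine max_le_max ?_ le_rfl
        have := (hRA x t).2
        simp only [hf]
        nlinarith
      exact le_antisymm ((csInf_le ⟨_, hlb⟩ hmem).trans hge)
        (le_csInf ⟨_, hmem⟩ hlb)
  · intro h a
    classical
    set μA : S → ℝ := fun x => if x = a ∨ ∃ s, x = a * s then 1 else 0 with hμA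
    set νA : S → ℝ := fun x => 1 - μA x with hνA
    set μB : S → ℝ := fun x => if x = a ∨ ∃ s, x = s * a then 1 else 0 with hμB
    set νB : S → ℝ := fun x => 1 - μB x with hνB
    have hμA01 : ∀ x, μA x = 0 ∨ μA x = 1 := by
      intro x; simp only [hμA]; split <;> simp
    have hμB01 : ∀ x, μB x = 0 ∨ μB x = 1 := by
      intro x; simp only [hμB]; split <;> simp
    have hsubA : IsIFSubset μA νA := by
      intro x
      rcases hμA01 x with h0 | h0 <;> simp [hνA, h0]
    have hsubB : IsIFSubset μB νB := by
      intro x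
      rcases hμB01 x with h0 | h0 <;> simp [hνB, h0]
    have hRA : IsIFRightIdeal μA νA := by
      intro x y
      have key : μA x ≤ μA (x * y) := by
        by_cases hc : x = a ∨ ∃ s, x = a * s
        · have : x * y = a ∨ ∃ s, x * y = a * s := by
            rcases hc with rfl | ⟨s, rfl⟩
            · exact Or.inr ⟨y, rfl⟩
            · exact Or.inr ⟨s * y, by rw [mul_assoc]⟩
          simp [hμA, hc, this]
        · simp only [hμA, if_neg hc]
          split <;> norm_num
      exact ⟨key, by simp only [hνA]; linarith⟩
    have hLB : IsIFLeftIdeal μB νB := by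
      intro x y
      have key : μB y ≤ μB (x * y) := by
        by_cases hc : y = a ∨ ∃ s, y = s * a
        · have : x * y = a ∨ ∃ s, x * y = s * a := by
            rcases hc with rfl | ⟨s, rfl⟩
            · exact Or.inr ⟨x, rfl⟩
            · exact Or.inr ⟨x * s, by rw [mul_assoc]⟩
          simp [hμB, hc, this]
        · simp only [hμB, if_neg hc]
          split <;> norm_num
      exact ⟨key, by simp only [hνB]; linarith⟩
    have key := (h μA νA μB νB hsubA hsubB hRA hLB 1 0 one_pos le_rfl le_rfl
      (fun x _ => by positivity) (fun x _ => by positivity) a).1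
    have hμAa : μA a = 1 := by simp [hμA]
    have hμBa : μB a = 1 := by simp [hμB]
    rw [hμAa, hμBa] at key
    norm_num at key
    -- key : ifMuProd (fun s => 1 * μA s + 0) (fun s => 1 * μB s + 0) a = 1
    by_cases hex : ∃ u v : S, a = u * v
    · rw [ifMuProd, if_pos hex] at key
      set P := {r : ℝ | ∃ u v : S, a = u * v ∧ r = min (μA u) (μB v)} with hP
      have hne : P.Nonempty := by
        obtain ⟨u, v, huv⟩ := hex
        exact ⟨_, u, v, huv, rfl⟩
      have : (1 : ℝ) / 2 < sSup P := by rw [key]; norm_num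
      obtain ⟨r, hrP, hr⟩ := exists_lt_of_lt_csSup hne this
      obtain ⟨u, v, huv, rfl⟩ := hrP
      have hu : μA u = 1 := by
        rcases hμA01 u with h0 | h0
        · rw [h0] at hr; simp at hr; linarith [hr.1]
        · exact h0
      have hv : μB v = 1 := by
        rcases hμB01 v with h0 | h0
        · rw [h0] at hr; simp at hr; linarith [hr.2]
        · exact h0
      have hu' : u = a ∨ ∃ s, u = a * s := by
        by_contra hc; simp only [hμA, if_neg hc] at hu; norm_num at hu
      have hv' : v = a ∨ ∃ s, v = s * a := by
        by_contra hc; simp only [hμB, if_neg hc] at hv; norm_num at hv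
      rcases hu' with hu1 | ⟨s, hs⟩ <;> rcases hv' with hv1 | ⟨s', hs'⟩
      · rw [hu1, hv1] at huv
        exact ⟨a, by rw [← huv, ← huv]⟩
      · exact ⟨s', huv.trans (by rw [hu1, hs', ← mul_assoc])⟩
      · exact ⟨s, huv.trans (by rw [hs, hv1])⟩
      · exact ⟨s * s', huv.trans (by
          rw [hs, hs', mul_assoc a s, ← mul_assoc s s', ← mul_assoc])⟩
    · rw [ifMuProd, if_neg hex] at key
      norm_num at key
end
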